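/- For all λ, μ > 0 and r, s ∈ ℝ, (r − s)·(ψ_λ(r) − ψ_μ(s)) ≥ −(1/4)(μ·ψ_λ(r)² + λ·ψ_μ(s)²). -/
import Mathlib


/-- (r − s)(ψ_λ(r) − ψ_μ(s)) ≥ −(1/4)(μ ψ_λ(r)² + λ ψ_μ(s)²). -/
theorem yosida_cross_lower_bound
    (ψ : ℝ → ℝ) (hmono : Monotone ψ) (hcont : Continuous ψ)
    (J : ℝ → ℝ → ℝ)
    (hJ : ∀ (lam : ℝ), 0 < lam → ∀ r : ℝ, J lam r + lam * ψ (J lam r) = r) :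
    ∀ (lam mu : ℝ), 0 < lam → 0 < mu → ∀ r s : ℝ,
      (r - s) * ((r - J lam r) / lam - (s - J mu s) / mu) ≥
        -(1 / 4) * (mu * ((r - J lam r) / lam) ^ 2 + lam * ((s - J mu s) / mu) ^ 2) := by
  intro lam mu hlam hmu r s
  have h1 := hJ lam hlam r
  have h2 := hJ mu hmu s
  have e1 : (r - J lam r) / lam = ψ (J lam r) := by
    field_simp; linarith
  have e2 : (s - J mu s) / mu = ψ (J mu s) := by
    field_simp; linarith
  rw [e1, e2]
  have hm : (J lam r - J mu s) * (ψ (J lam r) - ψ (J mu s)) ≥ 0 := by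
    rcases le_total (J lam r) (J mu s) with h | h
    · have := hmono h
      nlinarith
    · have := hmono h
      nlinarith
  have key : (r - s) * (ψ (J lam r) - ψ (J mu s)) =
      (J lam r - J mu s) * (ψ (J lam r) - ψ (J mu s)) + lam * ψ (J lam r) ^ 2
        + mu * ψ (J mu s) ^ 2 - (lam + mu) * (ψ (J lam r) * ψ (J mu s)) := by
    linear_combination (ψ (J mu s) - ψ (J lam r)) * h1 + (ψ (J lam r) - ψ (J mu s)) * h2
  nlinarith [hm, key, mul_nonneg hlam.le (sq_nonneg (ψ (J lam r) - ψ (J mu s) / 2)), mul_nonneg hmu.le (sq_nonneg (ψ (J mu s) - ψ (J lam r) / 2))]
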